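/- Let R be a (possibly noncommutative) ring equipped with an involution τ satisfying τ(a+b) = τ(a)+τ(b), τ(ab) = τ(b)τ(a), and τ(τ(a)) = a. For a sequence x : ℕ → R define its star sequence x* : ℕ → R recursively by x*₀ = x*₁ = 0 and, for l ≥ 2, x*_l = ∑_{r+s=l, r,s≥1} τ(x_s)·τ(x_r) − ∑_{r+s=l, r,s≥1} τ(x_s)·x*_r, and set L(x)_b = τ(x_b) − x*_b. Given two sequences x, y : ℕ → R, define z : ℕ → R by z_m = x_m + y_m + ∑_{a+b=m, a,b≥1} x_a·y_b. Then for every n ≥ 1: ∑_{a+b=n, a,b≥1} τ(z_a)·(τ(z_b) − z*_b) = x*_n + y*_n + ∑_{a+b=n, a,b≥1} τ(y_a)·τ(x_b) + ∑_{a+b=n, a,b≥1} (τ(x_a) − x*_a)·(τ(y_b) − y*_b), where z* is the star sequence of z defined by the same recursion. -/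

import Mathlib

/-!
Identify a sequence `f` with the power series `∑_{n ≥ 1} f n Xⁿ` in `R⟦X⟧`. The recursion
defining `x*` says `x* = τ(x) L(x)` with `L(x) = τ(x) - x*`, i.e. `(1 + τ(x)) (1 - L(x)) = 1`,
so `1 - L(x)` is the inverse of the unit `1 + τ(x)`. Since `τ` reverses products,
`1 + τ(z) = (1 + τ(y)) (1 + τ(x))`, hence `1 - L(z) = (1 - L(x)) (1 - L(y))`. Expanding
`z* = τ(z) - L(z)` gives the identity, whose left side is `z*_n` by the recursion.
-/

/-- The "star sequence" `x*` of a sequence `x` in a ring with an involution `τ`: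
`x*₀ = x*₁ = 0` and, for `l ≥ 2`,
`x*_l = ∑_{r+s=l, r,s≥1} τ(x_s)·τ(x_r) − ∑_{r+s=l, r,s≥1} τ(x_s)·x*_r`. -/
def starSeq {R : Type*} [Ring R] (τ : R → R) (x : ℕ → R) : ℕ → R
  | 0 => 0
  | 1 => 0
  | l + 2 =>
    (∑ r ∈ Finset.Ioo 0 (l + 2), τ (x (l + 2 - r)) * τ (x r)) -
      ∑ r ∈ (Finset.Ioo 0 (l + 2)).attach, τ (x (l + 2 - r.1)) * starSeq τ x r.1
  termination_by l => l
  decreasing_by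
    have := r.2
    simp only [Finset.mem_Ioo] at this
    omega

open Finset PowerSeries

theorem Finset.sum_Ioo_zero_reflect {M : Type*} [AddCommMonoid M] (f : ℕ → M) (n : ℕ) :
    ∑ a ∈ Ioo 0 n, f (n - a) = ∑ a ∈ Ioo 0 n, f a := by
  rw [← Ico_add_one_left_eq_Ioo, zero_add]
  simpa using sum_Ico_reflect f 1 (Nat.le_succ n)

namespace PowerSeries

variable {R : Type*} [Ring R]

def mkPos (f : ℕ → R) : R⟦X⟧ :=
  mk fun n => if n = 0 then 0 else f n

theorem coeff_mkPos (f : ℕ → R) (n : ℕ) : coeff n (mkPos f) = if n = 0 then 0 else f n :=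
  coeff_mk _ _

theorem coeff_mkPos_of_apply_zero {f : ℕ → R} (hf : f 0 = 0) (n : ℕ) :
    coeff n (mkPos f) = f n := by
  rw [coeff_mkPos]
  split_ifs with hn <;> simp [hn, hf]

@[simp]
theorem constantCoeff_mkPos (f : ℕ → R) : constantCoeff (mkPos f) = 0 := by
  simp [← coeff_zero_eq_constantCoeff_apply, coeff_mkPos]

theorem mkPos_sub (f g : ℕ → R) : mkPos (fun n => f n - g n) = mkPos f - mkPos g := by
  ext n; simp only [coeff_mkPos, map_sub]; split_ifs <;> simp

theorem coeff_mkPos_mul (f g : ℕ → R) (n : ℕ) :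
    coeff n (mkPos f * mkPos g) = ∑ a ∈ Ioo 0 n, f a * g (n - a) := by
  rw [coeff_mul, Nat.sum_antidiagonal_eq_sum_range_succ_mk]
  refine (sum_subset (fun a ha => ?_) fun a _ ha => ?_).symm.trans
    (sum_congr rfl fun a ha => ?_)
  · simp only [mem_Ioo, mem_range] at ha ⊢; omega
  · have : a = 0 ∨ n - a = 0 := by simp only [mem_Ioo] at ha; omega
    rcases this with h | h <;> simp [coeff_mkPos, h]
  · simp only [mem_Ioo] at ha
    simp [coeff_mkPos, ha.1.ne', show n - a ≠ 0 by omega]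

end PowerSeries

section StarSeq

variable {R : Type*} [Ring R]

/-- The coefficient sequence of `(1 + x) (1 + y) - 1`, for `x`, `y` read as series via `mkPos`. -/
def circProd (x y : ℕ → R) (m : ℕ) : R :=
  x m + y m + ∑ a ∈ Ioo 0 m, x a * y (m - a)

variable (τ : R → R)

/-- The paper's `L(x)_b = τ(x_b) − x*_b`. -/
def starSeqL (x : ℕ → R) : ℕ → R :=
  fun b => τ (x b) - starSeq τ x b

@[simp]
theorem starSeq_zero (x : ℕ → R) : starSeq τ x 0 = 0 := by
  rw [starSeq]

theorem starSeq_eq_sum (x : ℕ → R) (n : ℕ) :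
    starSeq τ x n = ∑ a ∈ Ioo 0 n, τ (x a) * starSeqL τ x (n - a) := by
  match n with
  | 0 => simp
  | 1 => simp [starSeq, show Ioo 0 1 = ∅ from rfl]
  | l + 2 =>
    rw [starSeq, sum_attach (Ioo 0 (l + 2)) fun r => τ (x (l + 2 - r)) * starSeq τ x r,
      ← sum_sub_distrib, ← sum_Ioo_zero_reflect]
    refine sum_congr rfl fun a ha => ?_
    rw [starSeqL, mul_sub, Nat.sub_sub_self (mem_Ioo.1 ha).2.le]

theorem mkPos_starSeq (x : ℕ → R) :
    mkPos (starSeq τ x) = mkPos (τ ∘ x) * mkPos (starSeqL τ x) := by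
  ext n
  rw [coeff_mkPos_of_apply_zero (starSeq_zero τ x), coeff_mkPos_mul, starSeq_eq_sum]
  rfl

theorem mkPos_starSeqL (x : ℕ → R) :
    mkPos (starSeqL τ x) = mkPos (τ ∘ x) - mkPos (starSeq τ x) :=
  mkPos_sub _ _

theorem one_add_mul_one_sub_mkPos_starSeqL (x : ℕ → R) :
    (1 + mkPos (τ ∘ x)) * (1 - mkPos (starSeqL τ x)) = 1 := by
  have h := mkPos_starSeq τ x
  rw [mkPos_starSeqL] at h ⊢
  rw [mul_sub, mul_one, add_mul, one_mul, ← h]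
  abel

theorem mkPos_comp_circProd (hadd : ∀ a b, τ (a + b) = τ a + τ b)
    (hmul : ∀ a b, τ (a * b) = τ b * τ a) (x y : ℕ → R) :
    mkPos (τ ∘ circProd x y) =
      mkPos (τ ∘ x) + mkPos (τ ∘ y) + mkPos (τ ∘ y) * mkPos (τ ∘ x) := by
  have hsum (s : Finset ℕ) (f : ℕ → R) : τ (∑ i ∈ s, f i) = ∑ i ∈ s, τ (f i) :=
    map_sum (AddMonoidHom.mk' τ hadd) f s
  ext n
  rw [map_add, map_add, coeff_mkPos_mul, coeff_mkPos, coeff_mkPos, coeff_mkPos]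
  rcases eq_or_ne n 0 with rfl | hn
  · simp
  simp only [hn, if_false, Function.comp_apply]
  rw [circProd, hadd, hadd, hsum, ← sum_Ioo_zero_reflect]
  refine congrArg _ (sum_congr rfl fun a ha => ?_)
  rw [hmul, Nat.sub_sub_self (mem_Ioo.1 ha).2.le]

/-- Both sides are right inverses of the unit `1 + τ(z) = (1 + τ(y)) (1 + τ(x))`. -/
theorem one_sub_mkPos_starSeqL_circProd (hadd : ∀ a b, τ (a + b) = τ a + τ b)
    (hmul : ∀ a b, τ (a * b) = τ b * τ a) (x y : ℕ → R) :
    1 - mkPos (starSeqL τ (circProd x y)) =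
      (1 - mkPos (starSeqL τ x)) * (1 - mkPos (starSeqL τ y)) := by
  set z := circProd x y
  have hz : 1 + mkPos (τ ∘ z) = (1 + mkPos (τ ∘ y)) * (1 + mkPos (τ ∘ x)) := by
    rw [mkPos_comp_circProd τ hadd hmul]
    noncomm_ring
  have hunit : IsUnit (1 + mkPos (τ ∘ z)) := by
    simp [isUnit_iff_constantCoeff]
  refine hunit.mul_left_cancel ?_
  rw [one_add_mul_one_sub_mkPos_starSeqL, hz, mul_assoc, ← mul_assoc (1 + mkPos (τ ∘ x)),
    one_add_mul_one_sub_mkPos_starSeqL, one_mul, one_add_mul_one_sub_mkPos_starSeqL]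

theorem starSeq_circProd (hadd : ∀ a b, τ (a + b) = τ a + τ b)
    (hmul : ∀ a b, τ (a * b) = τ b * τ a) (x y : ℕ → R) (n : ℕ) :
    starSeq τ (circProd x y) n =
      starSeq τ x n + starSeq τ y n + ∑ a ∈ Ioo 0 n, τ (y a) * τ (x (n - a)) +
        ∑ a ∈ Ioo 0 n, starSeqL τ x a * starSeqL τ y (n - a) := by
  set z := circProd x y
  have hLz : mkPos (starSeqL τ z) = mkPos (starSeqL τ x) + mkPos (starSeqL τ y) -
      mkPos (starSeqL τ x) * mkPos (starSeqL τ y) := by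
    rw [← sub_sub_cancel 1 (mkPos (starSeqL τ z)), one_sub_mkPos_starSeqL_circProd τ hadd hmul]
    noncomm_ring
  have hS (w : ℕ → R) : mkPos (starSeq τ w) = mkPos (τ ∘ w) - mkPos (starSeqL τ w) := by
    rw [mkPos_starSeqL, sub_sub_cancel]
  have hSz : mkPos (starSeq τ z) = mkPos (starSeq τ x) + mkPos (starSeq τ y) +
      mkPos (τ ∘ y) * mkPos (τ ∘ x) + mkPos (starSeqL τ x) * mkPos (starSeqL τ y) := by
    rw [hS, hS x, hS y, hLz, mkPos_comp_circProd τ hadd hmul]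
    abel
  simpa only [map_add, coeff_mkPos_mul, Function.comp_apply,
    coeff_mkPos_of_apply_zero (starSeq_zero τ _)]
    using congrArg (coeff n) hSz

end StarSeq

theorem stmt_19 {R : Type*} [Ring R] (τ : R → R)
    (hadd : ∀ a b, τ (a + b) = τ a + τ b)
    (hmul : ∀ a b, τ (a * b) = τ b * τ a)
    (x y : ℕ → R) (n : ℕ) :
    let z : ℕ → R := fun m => x m + y m + ∑ a ∈ Finset.Ioo 0 m, x a * y (m - a)
    ∑ a ∈ Finset.Ioo 0 n, τ (z a) * (τ (z (n - a)) - starSeq τ z (n - a)) =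
      starSeq τ x n + starSeq τ y n +
        (∑ a ∈ Finset.Ioo 0 n, τ (y a) * τ (x (n - a))) +
        ∑ a ∈ Finset.Ioo 0 n,
          (τ (x a) - starSeq τ x a) * (τ (y (n - a)) - starSeq τ y (n - a)) :=
  (starSeq_eq_sum τ _ n).symm.trans (starSeq_circProd τ hadd hmul x y n)
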